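/- Let f: S → S̄ be an isometry and suppose a curve with parameter functions (u(s), v(s)) has position vector in the tangent plane on both S and S̄, with the same coefficient functions λ, μ (with μ ≠ 0 and nondegenerate denominators). Then the second fundamental form coefficients satisfy u'²(LM̄ − L̄M) + v'²(MN̄ − M̄N) + u'v'(LN̄ − L̄N) = 0 along the curve. -/

import Mathlib

/-!
Differentiating `γ = λ φ_u + μ φ_v` along `(u, v)` and taking the normal component with the
Gauss equations gives `λ (u'L + v'M) + μ (u'M + v'N) = 0` on `S`, and the same with barred
coefficients on `S̄`. So the vector `(λ, μ)`, which is nonzero as `μ ≠ 0`, lies in the kernel of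
the matrix with rows `(u'L + v'M, u'M + v'N)` and `(u'L̄ + v'M̄, u'M̄ + v'N̄)`; its determinant,
expanded, is the claimed expression.
-/

noncomputable section

def dot (a b : Fin 3 → ℝ) : ℝ := ∑ i, a i * b i

theorem dot_eq_dotProduct (a b : Fin 3 → ℝ) : dot a b = a ⬝ᵥ b := rfl

theorem dot_normal_of_eq_lincomb {V X Y n : Fin 3 → ℝ} {a b l : ℝ}
    (hV : V = a • X + b • Y + l • n) (hX : dot n X = 0) (hY : dot n Y = 0) (hn : dot n n = 1) :
    dot V n = l := by
  subst hV
  simp only [dot_eq_dotProduct, dotProduct_comm n] at hX hY hn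
  simp only [dot_eq_dotProduct, add_dotProduct, smul_dotProduct, hX, hY, hn, smul_eq_mul]
  ring

theorem hasDerivAt_comp_prodMk {E : Type*} [NormedAddCommGroup E] [NormedSpace ℝ E]
    {F : ℝ × ℝ → E} {u v : ℝ → ℝ} {s : ℝ} (hF : DifferentiableAt ℝ F (u s, v s))
    (hu : DifferentiableAt ℝ u s) (hv : DifferentiableAt ℝ v s) :
    HasDerivAt (fun t => F (u t, v t))
      (deriv u s • fderiv ℝ F (u s, v s) (1, 0) + deriv v s • fderiv ℝ F (u s, v s) (0, 1)) s := by
  have hsplit : ((deriv u s, deriv v s) : ℝ × ℝ) = deriv u s • (1, 0) + deriv v s • (0, 1) := by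
    simp
  have h := hF.hasFDerivAt.comp_hasDerivAt s (hu.hasDerivAt.prodMk hv.hasDerivAt)
  rwa [hsplit, map_add, map_smul, map_smul] at h

theorem dot_deriv_frame_combination_normal {φu φv N : ℝ × ℝ → Fin 3 → ℝ} {L M N₂ : ℝ}
    {lam mu u v : ℝ → ℝ} {s : ℝ}
    (hφu : DifferentiableAt ℝ φu (u s, v s)) (hφv : DifferentiableAt ℝ φv (u s, v s))
    (hlam : DifferentiableAt ℝ lam s) (hmu : DifferentiableAt ℝ mu s)
    (hu : DifferentiableAt ℝ u s) (hv : DifferentiableAt ℝ v s)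
    (hNu : dot (N (u s, v s)) (φu (u s, v s)) = 0) (hNv : dot (N (u s, v s)) (φv (u s, v s)) = 0)
    (hL : dot (fderiv ℝ φu (u s, v s) (1, 0)) (N (u s, v s)) = L)
    (hMu : dot (fderiv ℝ φu (u s, v s) (0, 1)) (N (u s, v s)) = M)
    (hMv : dot (fderiv ℝ φv (u s, v s) (1, 0)) (N (u s, v s)) = M)
    (hN : dot (fderiv ℝ φv (u s, v s) (0, 1)) (N (u s, v s)) = N₂) :
    dot (deriv (fun t => lam t • φu (u t, v t) + mu t • φv (u t, v t)) s) (N (u s, v s))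
      = lam s * (deriv u s * L + deriv v s * M) + mu s * (deriv u s * M + deriv v s * N₂) := by
  have hγ : HasDerivAt (fun t => lam t • φu (u t, v t) + mu t • φv (u t, v t)) _ s :=
    (hlam.hasDerivAt.smul (hasDerivAt_comp_prodMk hφu hu hv)).add
      (hmu.hasDerivAt.smul (hasDerivAt_comp_prodMk hφv hu hv))
  rw [hγ.deriv]
  simp only [dot_eq_dotProduct, dotProduct_comm (N _)] at hNu hNv hL hMu hMv hN ⊢
  simp only [add_dotProduct, smul_dotProduct, smul_eq_mul, hNu, hNv, hL, hMu, hMv, hN]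
  ring

theorem mul_sub_mul_eq_zero_of_kernel {lam mu a b c d : ℝ} (hmu : mu ≠ 0)
    (h₁ : lam * a + mu * b = 0) (h₂ : lam * c + mu * d = 0) : a * d - c * b = 0 := by
  refine (mul_eq_zero.mp ?_).resolve_left hmu
  linear_combination a * h₂ - c * h₁

theorem second_fundamental_form_relation_general
    (φu φv N φbu φbv Nbar : ℝ × ℝ → Fin 3 → ℝ)
    (Γ111 Γ211 Γ112 Γ212 Γ122 Γ222 L M N₂ : ℝ × ℝ → ℝ)
    (Γb111 Γb211 Γb112 Γb212 Γb122 Γb222 Lb Mb Nb₂ : ℝ × ℝ → ℝ)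
    (lam mu u v : ℝ → ℝ) (γ γbar : ℝ → Fin 3 → ℝ) (c : ℝ → ℝ × ℝ)
    (hdu : Differentiable ℝ φu) (hdv : Differentiable ℝ φv)
    (hdbu : Differentiable ℝ φbu) (hdbv : Differentiable ℝ φbv)
    (hlam : Differentiable ℝ lam) (hmu : Differentiable ℝ mu)
    (huu : Differentiable ℝ u) (hvv : Differentiable ℝ v)
    (hc : c = fun s => (u s, v s))
    (hγ : γ = fun s => lam s • φu (c s) + mu s • φv (c s))
    (hγbar : γbar = fun s => lam s • φbu (c s) + mu s • φbv (c s))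
    -- Gauss equations on S
    (hgauss_uu : ∀ p, fderiv ℝ φu p (1, 0) = Γ111 p • φu p + Γ211 p • φv p + L p • N p)
    (hgauss_uv : ∀ p, fderiv ℝ φu p (0, 1) = Γ112 p • φu p + Γ212 p • φv p + M p • N p)
    (hgauss_vu : ∀ p, fderiv ℝ φv p (1, 0) = Γ112 p • φu p + Γ212 p • φv p + M p • N p)
    (hgauss_vv : ∀ p, fderiv ℝ φv p (0, 1) = Γ122 p • φu p + Γ222 p • φv p + N₂ p • N p)
    (hNunit : ∀ p, dot (N p) (N p) = 1)
    (hNu : ∀ p, dot (N p) (φu p) = 0)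
    (hNv : ∀ p, dot (N p) (φv p) = 0)
    -- Gauss equations on S̄
    (hbgauss_uu : ∀ p, fderiv ℝ φbu p (1, 0) = Γb111 p • φbu p + Γb211 p • φbv p + Lb p • Nbar p)
    (hbgauss_uv : ∀ p, fderiv ℝ φbu p (0, 1) = Γb112 p • φbu p + Γb212 p • φbv p + Mb p • Nbar p)
    (hbgauss_vu : ∀ p, fderiv ℝ φbv p (1, 0) = Γb112 p • φbu p + Γb212 p • φbv p + Mb p • Nbar p)
    (hbgauss_vv : ∀ p, fderiv ℝ φbv p (0, 1) = Γb122 p • φbu p + Γb222 p • φbv p + Nb₂ p • Nbar p)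
    (hNbunit : ∀ p, dot (Nbar p) (Nbar p) = 1)
    (hNbu : ∀ p, dot (Nbar p) (φbu p) = 0)
    (hNbv : ∀ p, dot (Nbar p) (φbv p) = 0)
    -- position vectors lie in the tangent planes: the velocities are tangent
    (htangent : ∀ s, dot (deriv γ s) (N (c s)) = 0)
    (htangentbar : ∀ s, dot (deriv γbar s) (Nbar (c s)) = 0)
    (hmu0 : ∀ s, mu s ≠ 0) :
    ∀ s, (deriv u s) ^ 2 * (L (c s) * Mb (c s) - Lb (c s) * M (c s))
        + (deriv v s) ^ 2 * (M (c s) * Nb₂ (c s) - Mb (c s) * N₂ (c s))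
        + deriv u s * deriv v s * (L (c s) * Nb₂ (c s) - Lb (c s) * N₂ (c s)) = 0 := by
  intro s
  subst hc hγ hγbar
  have hS := dot_deriv_frame_combination_normal (hdu _) (hdv _) (hlam s) (hmu s) (huu s) (hvv s)
    (hNu _) (hNv _)
    (dot_normal_of_eq_lincomb (hgauss_uu _) (hNu _) (hNv _) (hNunit _))
    (dot_normal_of_eq_lincomb (hgauss_uv _) (hNu _) (hNv _) (hNunit _))
    (dot_normal_of_eq_lincomb (hgauss_vu _) (hNu _) (hNv _) (hNunit _))
    (dot_normal_of_eq_lincomb (hgauss_vv _) (hNu _) (hNv _) (hNunit _))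
  have hSbar := dot_deriv_frame_combination_normal (hdbu _) (hdbv _) (hlam s) (hmu s)
    (huu s) (hvv s) (hNbu _) (hNbv _)
    (dot_normal_of_eq_lincomb (hbgauss_uu _) (hNbu _) (hNbv _) (hNbunit _))
    (dot_normal_of_eq_lincomb (hbgauss_uv _) (hNbu _) (hNbv _) (hNbunit _))
    (dot_normal_of_eq_lincomb (hbgauss_vu _) (hNbu _) (hNbv _) (hNbunit _))
    (dot_normal_of_eq_lincomb (hbgauss_vv _) (hNbu _) (hNbv _) (hNbunit _))
  have hdet := mul_sub_mul_eq_zero_of_kernel (hmu0 s)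
    (hS.symm.trans (htangent s)) (hSbar.symm.trans (htangentbar s))
  linear_combination hdet

/-- if a curve with parameter functions `(u(s), v(s))` has its
position vector in the tangent plane on both `S` and `S̄` with the same
coefficient functions `λ, μ` (with `μ ≠ 0` and nondegenerate denominators),
then the second fundamental form coefficients satisfy
`u'²(LM̄ − L̄M) + v'²(MN̄ − M̄N) + u'v'(LN̄ − L̄N) = 0` along the curve. -/
theorem second_fundamental_form_relation
    (φu φv N φbu φbv Nbar : ℝ × ℝ → Fin 3 → ℝ)
    (Γ111 Γ211 Γ112 Γ212 Γ122 Γ222 L M N₂ : ℝ × ℝ → ℝ)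
    (Γb111 Γb211 Γb112 Γb212 Γb122 Γb222 Lb Mb Nb₂ : ℝ × ℝ → ℝ)
    (lam mu u v : ℝ → ℝ) (γ γbar : ℝ → Fin 3 → ℝ) (c : ℝ → ℝ × ℝ)
    (hdu : Differentiable ℝ φu) (hdv : Differentiable ℝ φv)
    (hdbu : Differentiable ℝ φbu) (hdbv : Differentiable ℝ φbv)
    (hlam : Differentiable ℝ lam) (hmu : Differentiable ℝ mu)
    (huu : Differentiable ℝ u) (hvv : Differentiable ℝ v)
    (hc : c = fun s => (u s, v s))
    (hγ : γ = fun s => lam s • φu (c s) + mu s • φv (c s))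
    (hγbar : γbar = fun s => lam s • φbu (c s) + mu s • φbv (c s))
    -- Gauss equations on S
    (hgauss_uu : ∀ p, fderiv ℝ φu p (1, 0) = Γ111 p • φu p + Γ211 p • φv p + L p • N p)
    (hgauss_uv : ∀ p, fderiv ℝ φu p (0, 1) = Γ112 p • φu p + Γ212 p • φv p + M p • N p)
    (hgauss_vu : ∀ p, fderiv ℝ φv p (1, 0) = Γ112 p • φu p + Γ212 p • φv p + M p • N p)
    (hgauss_vv : ∀ p, fderiv ℝ φv p (0, 1) = Γ122 p • φu p + Γ222 p • φv p + N₂ p • N p)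
    (hNunit : ∀ p, dot (N p) (N p) = 1)
    (hNu : ∀ p, dot (N p) (φu p) = 0)
    (hNv : ∀ p, dot (N p) (φv p) = 0)
    -- Gauss equations on S̄
    (hbgauss_uu : ∀ p, fderiv ℝ φbu p (1, 0) = Γb111 p • φbu p + Γb211 p • φbv p + Lb p • Nbar p)
    (hbgauss_uv : ∀ p, fderiv ℝ φbu p (0, 1) = Γb112 p • φbu p + Γb212 p • φbv p + Mb p • Nbar p)
    (hbgauss_vu : ∀ p, fderiv ℝ φbv p (1, 0) = Γb112 p • φbu p + Γb212 p • φbv p + Mb p • Nbar p)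
    (hbgauss_vv : ∀ p, fderiv ℝ φbv p (0, 1) = Γb122 p • φbu p + Γb222 p • φbv p + Nb₂ p • Nbar p)
    (hNbunit : ∀ p, dot (Nbar p) (Nbar p) = 1)
    (hNbu : ∀ p, dot (Nbar p) (φbu p) = 0)
    (hNbv : ∀ p, dot (Nbar p) (φbv p) = 0)
    -- position vectors lie in the tangent planes: the velocities are tangent
    (htangent : ∀ s, dot (deriv γ s) (N (c s)) = 0)
    (htangentbar : ∀ s, dot (deriv γbar s) (Nbar (c s)) = 0)
    (hmu0 : ∀ s, mu s ≠ 0)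
    (hden : ∀ s, deriv u s * M (c s) + deriv v s * N₂ (c s) ≠ 0)
    (hdenbar : ∀ s, deriv u s * Mb (c s) + deriv v s * Nb₂ (c s) ≠ 0) :
    ∀ s, (deriv u s) ^ 2 * (L (c s) * Mb (c s) - Lb (c s) * M (c s))
        + (deriv v s) ^ 2 * (M (c s) * Nb₂ (c s) - Mb (c s) * N₂ (c s))
        + deriv u s * deriv v s * (L (c s) * Nb₂ (c s) - Lb (c s) * N₂ (c s)) = 0 :=
  second_fundamental_form_relation_general φu φv N φbu φbv Nbar Γ111 Γ211 Γ112 Γ212 Γ122 Γ222 L M N₂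
    Γb111 Γb211 Γb112 Γb212 Γb122 Γb222 Lb Mb Nb₂ lam mu u v γ γbar c hdu hdv hdbu hdbv hlam hmu huu
    hvv hc hγ hγbar hgauss_uu hgauss_uv hgauss_vu hgauss_vv hNunit hNu hNv hbgauss_uu hbgauss_uv
    hbgauss_vu hbgauss_vv hNbunit hNbu hNbv htangent htangentbar hmu0
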